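/- Let n ≥ 1 and s, t ∈ ℝ. For every ε > 0 there exists x₀ > 0 such that for every C¹ function u : ℝⁿ → ℝ with compact support contained in the slab {x ∈ ℝⁿ : 0 < xₙ < x₀}, one has ∫ e^{−2s/xₙ} xₙ^{2t} |∇u|² dx ≥ (s² − ε) ∫ e^{−2s/xₙ} xₙ^{2t−4} u² dx. -/

import Mathlib

open MeasureTheory Real

/-- The `i`-th partial derivative of a function on `ℝⁿ`. -/
noncomputable def pd (n : ℕ) (f : EuclideanSpace ℝ (Fin n) → ℝ)
    (i : Fin n) (x : EuclideanSpace ℝ (Fin n)) : ℝ :=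
  fderiv ℝ f x (EuclideanSpace.single i 1)

/-- The squared Euclidean norm of the gradient, `|∇f|² = Σᵢ (∂ᵢf)²`. -/
noncomputable def gradSq (n : ℕ) (f : EuclideanSpace ℝ (Fin n) → ℝ)
    (x : EuclideanSpace ℝ (Fin n)) : ℝ :=
  ∑ i, (pd n f i x) ^ 2

/-- The Euclidean Laplacian, `Δf = Σᵢ ∂ᵢ²f`. -/
noncomputable def lap (n : ℕ) (f : EuclideanSpace ℝ (Fin n) → ℝ)
    (x : EuclideanSpace ℝ (Fin n)) : ℝ :=
  ∑ i, pd n (pd n f i) i x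

/-!
With `G(y) = s e^{-2s/y} y^{2t-2}`, integrating `∂ₙ(G(xₙ) u²)` over ℝⁿ gives
`∫ 2 G(xₙ) u ∂ₙu = -∫ G'(xₙ) u²`. Adding this to `∫ e^{-2s/xₙ} xₙ^{2t} (∂ₙu)²` completes a square:
with `y = xₙ`, `p = ∂ₙu`, `q = u`,
`e^{-2s/y} y^{2t} p² + 2 G q p + G' q²`
`  = e^{-2s/y} ((y^t p + s y^{t-2} q)² + (s² + s(2t-2) y) y^{2t-4} q²)`,
and `s(2t-2) y ≥ -ε` as soon as `y < ε / (|s(2t-2)| + 1)`.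
-/

open Set Function

theorem integrable_of_continuousOn_of_eq_zero_off {X E : Type*} [TopologicalSpace X] [T2Space X]
    [MeasurableSpace X] [OpensMeasurableSpace X] {μ : Measure X} [IsFiniteMeasureOnCompacts μ]
    [NormedAddCommGroup E] {f : X → E} {K : Set X} (hK : IsCompact K) (hf : ContinuousOn f K)
    (hf0 : ∀ x ∉ K, f x = 0) : Integrable f μ :=
  (integrableOn_iff_integrable_of_support_subset fun x hx ↦ by_contra fun hxK ↦ hx (hf0 x hxK)).1
    (hf.integrableOn_compact hK)

noncomputable def expWeight (s r y : ℝ) : ℝ := exp (-2 * s / y) * y ^ r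

theorem continuousOn_expWeight (s r : ℝ) : ContinuousOn (expWeight s r) (Ioi 0) := by
  intro y (hy : 0 < y)
  exact ((continuousAt_const.div continuousAt_id hy.ne').rexp.mul
    (continuousAt_rpow_const _ _ (Or.inl hy.ne'))).continuousWithinAt

theorem expWeight_pos (s r : ℝ) {y : ℝ} (hy : 0 < y) : 0 < expWeight s r y :=
  mul_pos (exp_pos _) (rpow_pos_of_pos hy r)

theorem hasDerivAt_expWeight (s r : ℝ) {y : ℝ} (hy : 0 < y) :
    HasDerivAt (expWeight s r) (2 * s * expWeight s (r - 2) y + r * expWeight s (r - 1) y) y := by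
  have hexp : HasDerivAt (fun y ↦ exp (-2 * s / y)) (exp (-2 * s / y) * (2 * s / y ^ 2)) y := by
    have := ((hasDerivAt_inv hy.ne').const_mul (-2 * s)).exp
    convert this using 2 <;> field_simp
  refine (hexp.mul (hasDerivAt_rpow_const (p := r) (Or.inl hy.ne'))).congr_deriv ?_
  simp only [expWeight, rpow_sub hy, rpow_one, rpow_two]
  field_simp

theorem sub_mul_expWeight_mul_sq_le {s r ε y : ℝ} (hy : 0 < y) (hε : -ε ≤ s * r * y) (p q : ℝ) :
    (s ^ 2 - ε) * (expWeight s (r - 2) y * q ^ 2) ≤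
      expWeight s (r + 2) y * p ^ 2 + (s * expWeight s r y * (2 * q * p) +
        s * (2 * s * expWeight s (r - 2) y + r * expWeight s (r - 1) y) * q ^ 2) := by
  have hE := exp_pos (-2 * s / y)
  set a := y ^ (r / 2 + 1) with ha
  set b := y ^ (r / 2 - 1) with hb
  have hpow : ∀ c d : ℝ, y ^ (c + d) = y ^ c * y ^ d := fun c d ↦ rpow_add hy c d
  have h1 : y ^ (r + 2) = a * a := by rw [ha, ← hpow]; ring_nf
  have h2 : y ^ r = a * b := by rw [ha, hb, ← hpow]; ring_nf
  have h3 : y ^ (r - 2) = b * b := by rw [hb, ← hpow]; ring_nf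
  have h4 : y ^ (r - 1) = y * (b * b) := by
    rw [show r - 1 = 1 + (r - 2) by ring, hpow, rpow_one, h3]
  simp only [expWeight, h1, h2, h3, h4]
  nlinarith [mul_nonneg hE.le (sq_nonneg (a * p + s * b * q)),
    mul_nonneg (mul_nonneg (neg_le_iff_add_nonneg.1 hε) hE.le) (sq_nonneg (b * q))]

section EuclideanSpace

variable {n : ℕ} {u : EuclideanSpace ℝ (Fin n) → ℝ} {k : Fin n}

theorem pd_eq_zero_of_notMem_tsupport {x : EuclideanSpace ℝ (Fin n)} (hx : x ∉ tsupport u)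
    (i : Fin n) : pd n u i x = 0 := by
  simp [pd, fderiv_of_notMem_tsupport ℝ hx]

theorem gradSq_eq_zero_of_notMem_tsupport {x : EuclideanSpace ℝ (Fin n)} (hx : x ∉ tsupport u) :
    gradSq n u x = 0 := by
  simp [gradSq, pd_eq_zero_of_notMem_tsupport hx]

theorem sq_pd_le_gradSq (i : Fin n) (x : EuclideanSpace ℝ (Fin n)) :
    pd n u i x ^ 2 ≤ gradSq n u x :=
  Finset.single_le_sum (fun j _ ↦ sq_nonneg (pd n u j x)) (Finset.mem_univ i)

theorem ContDiff.continuous_pd (hu : ContDiff ℝ 1 u) (i : Fin n) : Continuous (pd n u i) :=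
  (hu.continuous_fderiv one_ne_zero).clm_apply continuous_const

theorem ContDiff.continuous_gradSq (hu : ContDiff ℝ 1 u) : Continuous (gradSq n u) :=
  continuous_finsetSum _ fun i _ ↦ (hu.continuous_pd i).pow 2

theorem fderiv_sq_apply_single {x : EuclideanSpace ℝ (Fin n)} (hu : DifferentiableAt ℝ u x)
    (i : Fin n) :
    fderiv ℝ (fun y ↦ u y ^ 2) x (EuclideanSpace.single i 1) = 2 * u x * pd n u i x := by
  rw [(hu.hasFDerivAt.pow 2).fderiv]
  simp [pd]

theorem hasFDerivAt_comp_apply {G : ℝ → ℝ} {G' : ℝ} {x : EuclideanSpace ℝ (Fin n)}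
    (hG : HasDerivAt G G' (x k)) :
    HasFDerivAt (fun y : EuclideanSpace ℝ (Fin n) ↦ G (y k))
      (G' • EuclideanSpace.proj (𝕜 := ℝ) k) x :=
  hG.comp_hasFDerivAt x (EuclideanSpace.proj (𝕜 := ℝ) k).hasFDerivAt

theorem integrable_comp_apply_mul {g : EuclideanSpace ℝ (Fin n) → ℝ} {F : ℝ → ℝ} {S : Set ℝ}
    (hF : ContinuousOn F S) (hcs : HasCompactSupport u) (hS : ∀ x ∈ tsupport u, x k ∈ S)
    (hg : Continuous g) (hg0 : ∀ x ∉ tsupport u, g x = 0) :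
    Integrable fun x ↦ F (x k) * g x :=
  integrable_of_continuousOn_of_eq_zero_off hcs
    ((hF.comp (PiLp.continuous_apply 2 _ k).continuousOn hS).mul hg.continuousOn)
    fun x hx ↦ by simp [hg0 x hx]

theorem integral_comp_apply_mul_two_mul_pd_eq_neg {G G' : ℝ → ℝ} {S : Set ℝ}
    (hG : ∀ y ∈ S, HasDerivAt G (G' y) y) (hG' : ContinuousOn G' S) (hu : ContDiff ℝ 1 u)
    (hcs : HasCompactSupport u) (hS : ∀ x ∈ tsupport u, x k ∈ S) :
    ∫ x, G (x k) * (2 * u x * pd n u k x) = -∫ x, G' (x k) * u x ^ 2 := by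
  have hud : Differentiable ℝ u := hu.differentiable one_ne_zero
  have hGc : ContinuousOn G S := HasDerivAt.continuousOn hG
  have hu0 : ∀ x ∉ tsupport u, u x = 0 := fun x hx ↦ image_eq_zero_of_notMem_tsupport hx
  have hderiv : ∀ x, fderiv ℝ (fun y ↦ G (y k)) x (EuclideanSpace.single k 1) * u x ^ 2 =
      G' (x k) * u x ^ 2 := by
    intro x
    by_cases hx : x ∈ tsupport u
    · simp [(hasFDerivAt_comp_apply (hG _ (hS x hx))).fderiv]
    · simp [hu0 x hx]
  have := integral_mul_fderiv_eq_neg_fderiv_mul_of_integrable (μ := volume)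
    (f := fun x ↦ G (x k)) (g := fun x ↦ u x ^ 2) (v := EuclideanSpace.single k 1) ?_ ?_ ?_ ?_
    (fun x _ ↦ (hud x).pow 2)
  · simpa only [hderiv, fderiv_sq_apply_single (hud _)] using this
  · simp only [hderiv]
    exact integrable_comp_apply_mul hG' hcs hS (hu.continuous.pow 2) fun x hx ↦ by simp [hu0 x hx]
  · simp only [fderiv_sq_apply_single (hud _)]
    exact integrable_comp_apply_mul hGc hcs hS
      ((continuous_const.mul hu.continuous).mul (hu.continuous_pd k)) fun x hx ↦ by simp [hu0 x hx]
  · exact integrable_comp_apply_mul hGc hcs hS (hu.continuous.pow 2) fun x hx ↦ by simp [hu0 x hx]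
  · intro x hx
    have hx' : x ∈ tsupport u := by rwa [tsupport, support_pow u two_ne_zero] at hx
    exact (hasFDerivAt_comp_apply (hG _ (hS x hx'))).differentiableAt

theorem sub_mul_expWeight_mul_sq_le_add_gradSq {s r ε : ℝ} (hpos : ∀ x ∈ tsupport u, 0 < x k)
    (hε : ∀ x ∈ tsupport u, -ε ≤ s * r * x k) (x : EuclideanSpace ℝ (Fin n)) :
    (s ^ 2 - ε) * (expWeight s (r - 2) (x k) * u x ^ 2) ≤
      expWeight s (r + 2) (x k) * gradSq n u x + (s * expWeight s r (x k) * (2 * u x * pd n u k x) +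
        s * (2 * s * expWeight s (r - 2) (x k) + r * expWeight s (r - 1) (x k)) * u x ^ 2) := by
  by_cases hx : x ∈ tsupport u
  · refine (sub_mul_expWeight_mul_sq_le (hpos x hx) (hε x hx) (pd n u k x) (u x)).trans ?_
    gcongr
    · exact (expWeight_pos s _ (hpos x hx)).le
    · exact sq_pd_le_gradSq k x
  · simp [image_eq_zero_of_notMem_tsupport hx, gradSq_eq_zero_of_notMem_tsupport hx]

theorem sub_mul_integral_expWeight_mul_sq_le {s r ε : ℝ} (hu : ContDiff ℝ 1 u)
    (hcs : HasCompactSupport u) (hpos : ∀ x ∈ tsupport u, 0 < x k)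
    (hε : ∀ x ∈ tsupport u, -ε ≤ s * r * x k) :
    (s ^ 2 - ε) * ∫ x, expWeight s (r - 2) (x k) * u x ^ 2 ≤
      ∫ x, expWeight s (r + 2) (x k) * gradSq n u x := by
  set G : ℝ → ℝ := fun y ↦ s * expWeight s r y
  set G' : ℝ → ℝ := fun y ↦ s * (2 * s * expWeight s (r - 2) y + r * expWeight s (r - 1) y)
  have hu0 : ∀ x ∉ tsupport u, u x = 0 := fun x hx ↦ image_eq_zero_of_notMem_tsupport hx
  have hGc : ContinuousOn G (Ioi 0) := continuousOn_const.mul (continuousOn_expWeight s r)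
  have hG'c : ContinuousOn G' (Ioi 0) :=
    continuousOn_const.mul ((continuousOn_const.mul (continuousOn_expWeight s _)).add
      (continuousOn_const.mul (continuousOn_expWeight s _)))
  have hibp : ∫ x, G (x k) * (2 * u x * pd n u k x) = -∫ x, G' (x k) * u x ^ 2 :=
    integral_comp_apply_mul_two_mul_pd_eq_neg
      (fun y hy ↦ (hasDerivAt_expWeight s r hy).const_mul s) hG'c hu hcs hpos
  have iV : Integrable fun x ↦ (s ^ 2 - ε) * (expWeight s (r - 2) (x k) * u x ^ 2) :=
    (integrable_comp_apply_mul (continuousOn_expWeight s (r - 2)) hcs hpos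
      (hu.continuous.pow 2) fun x hx ↦ by simp [hu0 x hx]).const_mul (s ^ 2 - ε)
  have iW : Integrable fun x ↦ expWeight s (r + 2) (x k) * gradSq n u x :=
    integrable_comp_apply_mul (continuousOn_expWeight s (r + 2)) hcs hpos
      hu.continuous_gradSq fun x hx ↦ gradSq_eq_zero_of_notMem_tsupport hx
  have iA : Integrable fun x ↦ G (x k) * (2 * u x * pd n u k x) :=
    integrable_comp_apply_mul hGc hcs hpos ((continuous_const.mul hu.continuous).mul
      (hu.continuous_pd k)) fun x hx ↦ by simp [hu0 x hx]
  have iB : Integrable fun x ↦ G' (x k) * u x ^ 2 :=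
    integrable_comp_apply_mul hG'c hcs hpos (hu.continuous.pow 2) fun x hx ↦ by simp [hu0 x hx]
  rw [← integral_const_mul]
  calc ∫ x, (s ^ 2 - ε) * (expWeight s (r - 2) (x k) * u x ^ 2)
      ≤ ∫ x, (expWeight s (r + 2) (x k) * gradSq n u x +
          (G (x k) * (2 * u x * pd n u k x) + G' (x k) * u x ^ 2)) :=
        integral_mono iV (iW.add (iA.add iB))
          (sub_mul_expWeight_mul_sq_le_add_gradSq hpos hε)
    _ = ∫ x, expWeight s (r + 2) (x k) * gradSq n u x := by
        rw [integral_add iW (iA.fun_add iB), integral_add iA iB, hibp, neg_add_cancel, add_zero]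

end EuclideanSpace

/-- Flat-case exponentially weighted Poincaré inequality near a boundary:
for every `ε > 0` there is `x₀ > 0` such that for all `C¹` functions `u`
compactly supported in the slab `{0 < xₙ < x₀}`,
`∫ e^{−2s/xₙ} xₙ^{2t} |∇u|² ≥ (s² − ε) ∫ e^{−2s/xₙ} xₙ^{2t−4} u²`. -/
theorem weighted_poincare_exp_halfspace (n : ℕ) (hn : 1 ≤ n) (s t : ℝ) :
    ∀ ε > (0:ℝ), ∃ x₀ > (0:ℝ),
      ∀ u : EuclideanSpace ℝ (Fin n) → ℝ,
        ContDiff ℝ 1 u → HasCompactSupport u →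
        tsupport u ⊆ {x : EuclideanSpace ℝ (Fin n) |
            0 < x ⟨n - 1, by omega⟩ ∧ x ⟨n - 1, by omega⟩ < x₀} →
        ∫ x : EuclideanSpace ℝ (Fin n),
            Real.exp (-2 * s / x (⟨n - 1, by omega⟩ : Fin n)) *
              (x (⟨n - 1, by omega⟩ : Fin n)) ^ (2 * t) * gradSq n u x ≥
          (s ^ 2 - ε) *
            ∫ x : EuclideanSpace ℝ (Fin n),
              Real.exp (-2 * s / x (⟨n - 1, by omega⟩ : Fin n)) *
                (x (⟨n - 1, by omega⟩ : Fin n)) ^ (2 * t - 4) * (u x) ^ 2 := by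
  intro ε hε
  set c := s * (2 * t - 2)
  refine ⟨ε / (|c| + 1), by positivity, fun u hu hcs hsupp ↦ ?_⟩
  have hcy : ∀ y : ℝ, 0 < y → y < ε / (|c| + 1) → -ε ≤ c * y := by
    intro y hy hyx
    rw [lt_div_iff₀ (by positivity)] at hyx
    nlinarith [neg_abs_le c, abs_nonneg c]
  have key := sub_mul_integral_expWeight_mul_sq_le hu hcs (fun x hx ↦ (hsupp hx).1)
    (fun x hx ↦ hcy _ (hsupp hx).1 (hsupp hx).2)
  rw [show 2 * t - 2 + 2 = 2 * t by ring, show 2 * t - 2 - 2 = 2 * t - 4 by ring] at key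
  exact key
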